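/- arXiv:1512.04797 — 2 statements merged into one kernel-verified Lean document; each statement's English description precedes it below -/
import Mathlib

section
/- Let M > 0 and t_f > 0 with 4M < t_f² < 6M, t₁ = (t_f − √(3(t_f² − 4M)))/2, and let u* be the piecewise control equal to -1 on [0, t₁], to (2t − t_f)/√(3(t_f² − 4M)) on [t₁, t_f − t₁], and to 1 on [t_f − t₁, t_f]. Let q solve q̈ = u*, q(0) = M, q̇(0) = 0. Then q(t_f) = 0 and q̇(t_f) = 0. -/
/-!
The control is affine on each of its three pieces, so there the double integrator integrates in
closed form. The middle piece has length s = √(3(t_f² - 4M)) = t_f - 2t₁ and leaves the velocity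
at -t₁, its value at t₁, which the last piece, of length t₁, brings back to 0. The final position
is M - t₁² - t₁s - s²/6 = M - t_f²/4 + s²/12, which vanishes because s² = 3(t_f² - 4M).
-/

open Set

lemma sub_eq_sub_of_hasDerivWithinAt_Icc {f f' F : ℝ → ℝ} {a b : ℝ}
    (hf : ∀ t ∈ Icc a b, HasDerivWithinAt f (f' t) (Icc a b) t)
    (hF : ∀ t ∈ Icc a b, HasDerivAt F (f' t) t) :
    ∀ t ∈ Icc a b, f t - f a = F t - F a := by
  have hcont : ContinuousOn (fun t => f t - F t) (Icc a b) := fun t ht =>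
    (hf t ht).continuousWithinAt.sub (hF t ht).continuousAt.continuousWithinAt
  have hderiv : ∀ t ∈ Ico a b, HasDerivWithinAt (fun t => f t - F t) 0 (Ici t) t := by
    intro t ht
    have h := ((hf t (Ico_subset_Icc_self ht)).sub
      (hF t (Ico_subset_Icc_self ht)).hasDerivWithinAt).mono_of_mem_nhdsWithin
      (Icc_mem_nhdsGE_of_mem ht)
    rwa [sub_self] at h
  intro t ht
  linarith [constant_of_has_deriv_right_zero hcont hderiv t ht]

lemma doubleIntegrator_of_affine_control {q q' u : ℝ → ℝ} {I : Set ℝ} {a b α β : ℝ}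
    (hab : a ≤ b) (hI : Icc a b ⊆ I)
    (hq : ∀ t ∈ I, HasDerivWithinAt q (q' t) I t)
    (hq' : ∀ t ∈ I, HasDerivWithinAt q' (u t) I t)
    (hu : ∀ t ∈ Icc a b, u t = α + β * (t - a)) :
    q' b = q' a + α * (b - a) + β * (b - a) ^ 2 / 2 ∧
      q b = q a + q' a * (b - a) + α * (b - a) ^ 2 / 2 + β * (b - a) ^ 3 / 6 := by
  have hb : b ∈ Icc a b := right_mem_Icc.2 hab
  have hx : ∀ t, HasDerivAt (fun t => t - a) 1 t := fun t => (hasDerivAt_id t).sub_const a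
  have hv : ∀ t ∈ Icc a b, q' t = q' a + α * (t - a) + β * (t - a) ^ 2 / 2 := by
    intro t ht
    have h := sub_eq_sub_of_hasDerivWithinAt_Icc
      (F := fun t => α * (t - a) + β * (t - a) ^ 2 / 2) (fun t ht => (hq' t (hI ht)).mono hI)
      (fun t ht => by
        rw [hu t ht]
        exact (((hx t).const_mul α).add (((hx t).pow 2).const_mul β |>.div_const 2)).congr_deriv
          (by ring)) t ht
    simp only [sub_self, mul_zero, ne_eq, OfNat.ofNat_ne_zero, not_false_eq_true, zero_pow,
      zero_div, add_zero, sub_zero] at h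
    linarith
  refine ⟨hv b hb, ?_⟩
  have h := sub_eq_sub_of_hasDerivWithinAt_Icc
    (F := fun t => q' a * (t - a) + α * (t - a) ^ 2 / 2 + β * (t - a) ^ 3 / 6)
    (fun t ht => (hq t (hI ht)).mono hI)
    (fun t ht => by
      rw [hv t ht]
      exact ((((hx t).const_mul (q' a)).add (((hx t).pow 2).const_mul α |>.div_const 2)).add
        (((hx t).pow 3).const_mul β |>.div_const 6)).congr_deriv (by push_cast; ring)) b hb
  simp only [sub_self, mul_zero, ne_eq, OfNat.ofNat_ne_zero, not_false_eq_true, zero_pow,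
    zero_div, add_zero] at h
  linarith

lemma doubleIntegrator_bang_affine_bang {q q' u : ℝ → ℝ} {t₁ s t_f : ℝ} (ht₁ : 0 ≤ t₁)
    (hs : 0 < s) (ht_f : t_f = 2 * t₁ + s)
    (hu : ∀ t, u t = if t ≤ t₁ then -1 else if t ≤ t_f - t₁ then (2 * t - t_f) / s else 1)
    (hq : ∀ t ∈ Icc 0 t_f, HasDerivWithinAt q (q' t) (Icc 0 t_f) t)
    (hq' : ∀ t ∈ Icc 0 t_f, HasDerivWithinAt q' (u t) (Icc 0 t_f) t) :
    q' t_f = q' 0 ∧ q t_f = q 0 + q' 0 * t_f - t₁ ^ 2 - t₁ * s - s ^ 2 / 6 := by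
  set t₂ := t_f - t₁ with ht₂
  have hu₁ : ∀ t ∈ Icc 0 t₁, u t = -1 + 0 * (t - 0) := by
    intro t ht
    rw [hu, if_pos ht.2]; ring
  have hu₂ : ∀ t ∈ Icc t₁ t₂, u t = -1 + 2 / s * (t - t₁) := by
    intro t ht
    rw [hu]
    split_ifs with h h'
    · rw [le_antisymm h ht.1]; ring
    · field_simp; linarith
    · exact absurd ht.2 h'
  have hu₃ : ∀ t ∈ Icc t₂ t_f, u t = 1 + 0 * (t - t₂) := by
    intro t ht
    rw [hu]
    split_ifs with h h'
    · linarith [ht.1]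
    · rw [le_antisymm h' ht.1]; field_simp; linarith
    · ring
  obtain ⟨hv₁, hp₁⟩ := doubleIntegrator_of_affine_control ht₁
    (Icc_subset_Icc le_rfl (by linarith)) hq hq' hu₁
  obtain ⟨hv₂, hp₂⟩ := doubleIntegrator_of_affine_control (by linarith)
    (Icc_subset_Icc ht₁ (by linarith)) hq hq' hu₂
  obtain ⟨hv₃, hp₃⟩ := doubleIntegrator_of_affine_control (by linarith)
    (Icc_subset_Icc (by linarith) le_rfl) hq hq' hu₃
  have ht₂_sub : t₂ - t₁ = s := by rw [ht₂, ht_f]; ring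
  have ht_f_sub : t_f - t₂ = t₁ := by rw [ht₂]; ring
  have hv_t₂ : q' t₂ = q' 0 - t₁ := by
    rw [hv₂, hv₁, ht₂_sub]; field_simp; ring
  have hp_t₂ : q t₂ = q 0 + q' 0 * (t₁ + s) - t₁ ^ 2 / 2 - t₁ * s - s ^ 2 / 6 := by
    rw [hp₂, hv₁, hp₁, ht₂_sub]; field_simp; ring
  constructor
  · rw [hv₃, hv_t₂, ht_f_sub]; ring
  · rw [hp₃, hp_t₂, hv_t₂, ht_f_sub, ht_f]; ring

theorem stmt_9_general (M t_f : ℝ) (htf : 0 < t_f)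
    (h1 : 4 * M < t_f ^ 2) (h2 : t_f ^ 2 < 6 * M)
    (t₁ : ℝ) (ht₁ : t₁ = (t_f - Real.sqrt (3 * (t_f ^ 2 - 4 * M))) / 2)
    (u : ℝ → ℝ)
    (hu : ∀ t, u t = if t ≤ t₁ then -1
      else if t ≤ t_f - t₁ then (2 * t - t_f) / Real.sqrt (3 * (t_f ^ 2 - 4 * M))
      else 1)
    (q q' : ℝ → ℝ)
    (hq : ∀ t ∈ Set.Icc 0 t_f, HasDerivWithinAt q (q' t) (Set.Icc 0 t_f) t)
    (hq' : ∀ t ∈ Set.Icc 0 t_f, HasDerivWithinAt q' (u t) (Set.Icc 0 t_f) t)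
    (h0 : q 0 = M) (h0' : q' 0 = 0) :
    q t_f = 0 ∧ q' t_f = 0 := by
  set s := Real.sqrt (3 * (t_f ^ 2 - 4 * M))
  have hs_pos : 0 < s := Real.sqrt_pos.2 (by linarith)
  have hs_sq : s ^ 2 = 3 * (t_f ^ 2 - 4 * M) := Real.sq_sqrt (by linarith)
  have ht₁_nonneg : 0 ≤ t₁ := by rw [ht₁]; nlinarith
  obtain ⟨hv, hp⟩ := doubleIntegrator_bang_affine_bang ht₁_nonneg hs_pos (by rw [ht₁]; ring)
    hu hq hq'
  constructor
  · rw [hp, h0, h0', ht₁]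
    linear_combination (1 / 12) * hs_sq
  · rw [hv, h0']

theorem stmt_9 (M t_f : ℝ) (hM : 0 < M) (htf : 0 < t_f)
    (h1 : 4 * M < t_f ^ 2) (h2 : t_f ^ 2 < 6 * M)
    (t₁ : ℝ) (ht₁ : t₁ = (t_f - Real.sqrt (3 * (t_f ^ 2 - 4 * M))) / 2)
    (u : ℝ → ℝ)
    (hu : ∀ t, u t = if t ≤ t₁ then -1
      else if t ≤ t_f - t₁ then (2 * t - t_f) / Real.sqrt (3 * (t_f ^ 2 - 4 * M))
      else 1)
    (q q' : ℝ → ℝ)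
    (hq : ∀ t ∈ Set.Icc 0 t_f, HasDerivWithinAt q (q' t) (Set.Icc 0 t_f) t)
    (hq' : ∀ t ∈ Set.Icc 0 t_f, HasDerivWithinAt q' (u t) (Set.Icc 0 t_f) t)
    (h0 : q 0 = M) (h0' : q' 0 = 0) :
    q t_f = 0 ∧ q' t_f = 0 :=
  stmt_9_general M t_f htf h1 h2 t₁ ht₁ u hu q q' hq hq' h0 h0'
end

section
/- Let M > 0 and t_f > 0 with 4M < t_f² < 6M, and set t₁ = (t_f − √(3(t_f² − 4M)))/2 and u* as the three-piece control of the parking problem. Then ∫₀^{t_f} u*(τ)² dτ = 2t₁ + (t_f − 2t₁)/3. -/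
open Set MeasureTheory intervalIntegral
open scoped Interval

/-! On the saturated arcs `u² = 1`; on the middle arc `u` is the affine ramp from `-1` at `t₁`
to `1` at `t_f - t₁`, whose square integrates to a third of the arc length. The condition
`t_f² < 6M` gives `√(3(t_f² - 4M)) ≤ t_f`, i.e. `0 ≤ t₁ ≤ t_f - t₁`, so the arcs are ordered. -/

theorem integral_eq_add_add_of_eqOn_uIoc {f f₁ f₂ f₃ : ℝ → ℝ} {a b c d : ℝ}
    (hf₁ : IntervalIntegrable f₁ volume a b) (hf₂ : IntervalIntegrable f₂ volume b c)
    (hf₃ : IntervalIntegrable f₃ volume c d)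
    (h₁ : EqOn f f₁ (Ι a b)) (h₂ : EqOn f f₂ (Ι b c)) (h₃ : EqOn f f₃ (Ι c d)) :
    ∫ x in a..d, f x = (∫ x in a..b, f₁ x) + (∫ x in b..c, f₂ x) + ∫ x in c..d, f₃ x := by
  have i₁ := hf₁.congr h₁.symm
  have i₂ := hf₂.congr h₂.symm
  rw [← integral_add_adjacent_intervals (i₁.trans i₂) (hf₃.congr h₃.symm),
    ← integral_add_adjacent_intervals i₁ i₂, integral_congr_ae (.of_forall fun _ => (h₁ ·)),
    integral_congr_ae (.of_forall fun _ => (h₂ ·)), integral_congr_ae (.of_forall fun _ => (h₃ ·))]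

theorem integral_sq_ramp (a b : ℝ) :
    ∫ t in a..b, ((2 * t - (a + b)) / (b - a)) ^ 2 = (b - a) / 3 := by
  rcases eq_or_ne a b with rfl | hab
  · simp
  have hba : b - a ≠ 0 := sub_ne_zero.2 hab.symm
  have hF : ∀ t, HasDerivAt (fun t => (2 * t - (a + b)) ^ 3 / (6 * (b - a) ^ 2))
      (((2 * t - (a + b)) / (b - a)) ^ 2) t := by
    intro t
    have hlin : HasDerivAt (fun t => 2 * t - (a + b)) 2 t := by
      simpa using ((hasDerivAt_id t).const_mul 2).sub_const (a + b)
    refine ((hlin.pow 3).div_const _).congr_deriv ?_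
    field_simp
    ring
  rw [integral_eq_sub_of_hasDerivAt (fun t _ => hF t)
    ((by fun_prop : Continuous _).intervalIntegrable _ _)]
  field_simp
  ring

theorem stmt_15_general (M t_f : ℝ) (htf : 0 < t_f)
    (h2 : t_f ^ 2 < 6 * M)
    (t₁ : ℝ) (ht₁ : t₁ = (t_f - Real.sqrt (3 * (t_f ^ 2 - 4 * M))) / 2)
    (u : ℝ → ℝ)
    (hu : ∀ t, u t = if t ≤ t₁ then -1
      else if t ≤ t_f - t₁ then (2 * t - t_f) / Real.sqrt (3 * (t_f ^ 2 - 4 * M))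
      else 1) :
    ∫ τ in (0 : ℝ)..t_f, (u τ) ^ 2 = 2 * t₁ + (t_f - 2 * t₁) / 3 := by
  set s := Real.sqrt (3 * (t_f ^ 2 - 4 * M))
  have hs_le : s ≤ t_f := Real.sqrt_le_iff.2 ⟨htf.le, by linarith⟩
  have hs : t_f - t₁ - t₁ = s := by rw [ht₁]; ring
  have ht₁_nonneg : 0 ≤ t₁ := by rw [ht₁]; linarith
  have ht₁_le : t₁ ≤ t_f - t₁ := by linarith [Real.sqrt_nonneg (3 * (t_f ^ 2 - 4 * M))]
  rw [integral_eq_add_add_of_eqOn_uIoc (f₁ := fun _ => 1) (f₃ := fun _ => 1)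
    (f₂ := fun t => ((2 * t - (t₁ + (t_f - t₁))) / (t_f - t₁ - t₁)) ^ 2)
    (b := t₁) (c := t_f - t₁) intervalIntegrable_const
    ((by fun_prop : Continuous _).intervalIntegrable _ _) intervalIntegrable_const]
  · rw [integral_sq_ramp]
    simp only [intervalIntegral.integral_const, smul_eq_mul, mul_one]
    linarith
  · intro t ht
    rw [uIoc_of_le ht₁_nonneg] at ht
    simp [hu, ht.2]
  · intro t ht
    rw [uIoc_of_le ht₁_le] at ht
    simp [hu, ht.2, not_le.2 ht.1, hs]
  · intro t ht
    rw [uIoc_of_le (by linarith)] at ht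
    simp [hu, not_le.2 ht.1, not_le.2 (ht₁_le.trans_lt ht.1)]

theorem stmt_15 (M t_f : ℝ) (hM : 0 < M) (htf : 0 < t_f)
    (h1 : 4 * M < t_f ^ 2) (h2 : t_f ^ 2 < 6 * M)
    (t₁ : ℝ) (ht₁ : t₁ = (t_f - Real.sqrt (3 * (t_f ^ 2 - 4 * M))) / 2)
    (u : ℝ → ℝ)
    (hu : ∀ t, u t = if t ≤ t₁ then -1
      else if t ≤ t_f - t₁ then (2 * t - t_f) / Real.sqrt (3 * (t_f ^ 2 - 4 * M))
      else 1) :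
    ∫ τ in (0 : ℝ)..t_f, (u τ) ^ 2 = 2 * t₁ + (t_f - 2 * t₁) / 3 :=
  stmt_15_general M t_f htf h2 t₁ ht₁ u hu
end
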